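/- arXiv:0909.3997 — 4 statements merged into one kernel-verified Lean document; each statement's English description precedes it below -/
import Mathlib

section
/- For any two tiling systems τ₁ and τ₂ in dimension 2, there exists a tiling system τ in dimension 2 such that the set of horizontal eigenperiods of valid tilings of τ equals the union of the set of horizontal eigenperiods of valid tilings of τ₁ and the set of horizontal eigenperiods of valid tilings of τ₂. -/
/-- A tiling system in dimension 2: a finite set of tiles `T` together with a
finite family of forbidden patterns, each given by a finite neighborhood
`nbhd i ⊆ ℤ²` and a pattern `pat i : ℤ² → T`. -/
structure TilingSystem2 where
  T : Type
  fintypeT : Fintype T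
  ι : Type
  fintypeι : Fintype ι
  nbhd : ι → Finset (ℤ × ℤ)
  pat : ι → ℤ × ℤ → T

/-- A tiling `c : ℤ² → T` is valid if no translate of a forbidden pattern appears in it. -/
def TilingSystem2.IsValid (τ : TilingSystem2) (c : ℤ × ℤ → τ.T) : Prop :=
  ∀ v : ℤ × ℤ, ∀ i : τ.ι, ¬ (∀ u ∈ τ.nbhd i, c (v + u) = τ.pat i u)

/-- `q` is a horizontal period of `c`: `q > 0` and `c (x + q, y) = c (x, y)` for all `x, y`. -/
def TilingSystem2.IsHorizPeriod (τ : TilingSystem2) (c : ℤ × ℤ → τ.T) (q : ℕ) : Prop :=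
  0 < q ∧ ∀ x y : ℤ, c (x + (q : ℤ), y) = c (x, y)

/-- `q` is the horizontal eigenperiod of `c`: the smallest horizontal period of `c`. -/
def TilingSystem2.IsHorizEigenperiod (τ : TilingSystem2) (c : ℤ × ℤ → τ.T) (q : ℕ) : Prop :=
  τ.IsHorizPeriod c q ∧ ∀ q' : ℕ, τ.IsHorizPeriod c q' → q ≤ q'

/-- `L_h(τ)`: the set of horizontal eigenperiods of valid tilings of `τ`. -/
def TilingSystem2.Lh (τ : TilingSystem2) : Set ℕ :=
  { q | ∃ c : ℤ × ℤ → τ.T, τ.IsValid c ∧ τ.IsHorizEigenperiod c q }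


/-! The tiling system for the union runs `τ₁` and `τ₂` side by side on the disjoint union of
their tiles, and additionally forbids horizontally or vertically adjacent tiles of different
origin. A valid tiling then uses tiles of only one side, so it is a valid tiling of `τ₁` or of
`τ₂` pushed along an injection, which changes neither validity nor periods. -/

open Function Finset

lemma eq_apply_zero_of_periodic {α : Type*} {g : ℤ × ℤ → α} (h₁ : Periodic g (1, 0))
    (h₂ : Periodic g (0, 1)) (v : ℤ × ℤ) : g v = g 0 := by
  have hv : v = v.1 • ((1 : ℤ), (0 : ℤ)) + v.2 • ((0 : ℤ), (1 : ℤ)) := by ext <;> simp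
  rw [hv, h₂.zsmul, h₁.zsmul_eq]

lemma Sum.exists_eq_inl_comp_iff {α β γ : Type*} {c : α → β ⊕ γ} :
    (∃ c₁, c = Sum.inl ∘ c₁) ↔ ∀ a, (c a).isLeft := by
  rw [← Set.range_subset_range_iff_exists_comp, Set.range_subset_iff]
  exact forall_congr' fun a => by rw [Sum.isLeft_iff]; exact exists_congr fun _ => eq_comm

lemma Sum.exists_eq_inr_comp_iff {α β γ : Type*} {c : α → β ⊕ γ} :
    (∃ c₂, c = Sum.inr ∘ c₂) ↔ ∀ a, (c a).isRight := by
  rw [← Set.range_subset_range_iff_exists_comp, Set.range_subset_iff]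
  exact forall_congr' fun a => by rw [Sum.isRight_iff]; exact exists_congr fun _ => eq_comm

namespace TilingSystem2

section Patterns

variable {β κ κ' : Type*}

def Avoids (c : ℤ × ℤ → β) (N : κ → Finset (ℤ × ℤ)) (p : κ → ℤ × ℤ → β) : Prop :=
  ∀ v k, ¬ ∀ u ∈ N k, c (v + u) = p k u

lemma avoids_sumElim {c : ℤ × ℤ → β} {N : κ → Finset (ℤ × ℤ)} {N' : κ' → Finset (ℤ × ℤ)}
    {p : κ → ℤ × ℤ → β} {p' : κ' → ℤ × ℤ → β} :
    Avoids c (Sum.elim N N') (Sum.elim p p') ↔ Avoids c N p ∧ Avoids c N' p' := by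
  simp only [Avoids, Sum.forall, Sum.elim_inl, Sum.elim_inr, forall_and]

lemma exists_forall_insert_zero_piecewise_iff {c : ℤ × ℤ → β} {N : Finset (ℤ × ℤ)}
    {p : ℤ × ℤ → β} {v : ℤ × ℤ} :
    (∃ t, ∀ u ∈ insert 0 N, c (v + u) = N.piecewise p (fun _ => t) u) ↔
      ∀ u ∈ N, c (v + u) = p u := by
  constructor
  · rintro ⟨t, h⟩ u hu
    simpa [hu] using h u (mem_insert_of_mem hu)
  · intro h
    refine ⟨c v, fun u hu => ?_⟩
    by_cases huN : u ∈ N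
    · simp [huN, h u huN]
    · obtain rfl : u = 0 := by simpa [huN] using hu
      simp [huN]

end Patterns

section Lift

variable (τ : TilingSystem2) {β : Type*}

/- The origin is added to every neighbourhood (carrying any tile of `τ`) so that a lifted pattern
only matches where the tiling takes values in the range of the lift; a pattern of `τ` with empty
neighbourhood would otherwise forbid every tiling. -/
def liftNbhd (i : τ.ι × τ.T) : Finset (ℤ × ℤ) :=
  insert 0 (τ.nbhd i.1)

def liftPat (f : τ.T → β) (i : τ.ι × τ.T) : ℤ × ℤ → β :=
  f ∘ (τ.nbhd i.1).piecewise (τ.pat i.1) fun _ => i.2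

variable {τ}

lemma avoids_liftPat_comp_iff {f : τ.T → β} (hf : Injective f) {c : ℤ × ℤ → τ.T} :
    Avoids (f ∘ c) τ.liftNbhd (τ.liftPat f) ↔ τ.IsValid c := by
  refine forall_congr' fun v => ⟨fun h j hj => ?_, fun h i hi => ?_⟩
  · obtain ⟨t, ht⟩ := exists_forall_insert_zero_piecewise_iff.2 hj
    exact h (j, t) fun u hu => congrArg f (ht u hu)
  · exact h i.1 (exists_forall_insert_zero_piecewise_iff.1 ⟨i.2, fun u hu => hf (hi u hu)⟩)

lemma avoids_liftPat_of_forall_notMem_range {f : τ.T → β} {c : ℤ × ℤ → β}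
    (hc : ∀ v, c v ∉ Set.range f) : Avoids c τ.liftNbhd (τ.liftPat f) :=
  fun v _ h => hc v ⟨_, by simpa [liftPat] using (h 0 (mem_insert_self _ _)).symm⟩

end Lift

section Clash

variable {β γ : Type*} (s : β → γ)

def unitStep : Fin 2 → ℤ × ℤ := ![(1, 0), (0, 1)]

lemma unitStep_ne_zero (k : Fin 2) : unitStep k ≠ 0 := by
  fin_cases k <;> simp [unitStep]

abbrev ClashIndex : Type _ := {p : β × β // s p.1 ≠ s p.2} × Fin 2

def clashNbhd (i : ClashIndex s) : Finset (ℤ × ℤ) := {0, unitStep i.2}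

def clashPat (i : ClashIndex s) : ℤ × ℤ → β := update (fun _ => i.1.1.2) 0 i.1.1.1

variable {s}

lemma avoids_clash_iff {c : ℤ × ℤ → β} :
    Avoids c (clashNbhd s) (clashPat s) ↔ ∀ v, s (c v) = s (c 0) := by
  constructor
  · intro h
    have step : ∀ k v, s (c (v + unitStep k)) = s (c v) := by
      refine fun k v => by_contra fun hne => h v ⟨⟨(c v, c (v + unitStep k)), Ne.symm hne⟩, k⟩ ?_
      simp [clashNbhd, clashPat, update_of_ne (unitStep_ne_zero k)]
    exact eq_apply_zero_of_periodic (g := s ∘ c) (step 0) (step 1)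
  · rintro h v ⟨⟨⟨x, y⟩, hxy⟩, k⟩ hm
    have hx : c v = x := by simpa [clashPat] using hm 0 (by simp [clashNbhd])
    have hy : c (v + unitStep k) = y := by
      simpa [clashPat, update_of_ne (unitStep_ne_zero k)] using
        hm (unitStep k) (by simp [clashNbhd])
    subst hx hy
    exact hxy ((h v).trans (h _).symm)

end Clash

noncomputable def sum (τ₁ τ₂ : TilingSystem2) : TilingSystem2 where
  T := τ₁.T ⊕ τ₂.T
  fintypeT := letI := τ₁.fintypeT; letI := τ₂.fintypeT; inferInstance
  ι := (τ₁.ι × τ₁.T) ⊕ (τ₂.ι × τ₂.T) ⊕ ClashIndex (Sum.isLeft (α := τ₁.T) (β := τ₂.T))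
  fintypeι := by
    letI := τ₁.fintypeT; letI := τ₂.fintypeT; letI := τ₁.fintypeι; letI := τ₂.fintypeι
    infer_instance
  nbhd := Sum.elim τ₁.liftNbhd (Sum.elim τ₂.liftNbhd (clashNbhd _))
  pat := Sum.elim (τ₁.liftPat Sum.inl) (Sum.elim (τ₂.liftPat Sum.inr) (clashPat _))

section Sum

variable {τ₁ τ₂ : TilingSystem2}

lemma isValid_sum_iff {c : ℤ × ℤ → τ₁.T ⊕ τ₂.T} :
    (τ₁.sum τ₂).IsValid c ↔ Avoids c τ₁.liftNbhd (τ₁.liftPat Sum.inl) ∧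
      Avoids c τ₂.liftNbhd (τ₂.liftPat Sum.inr) ∧ ∀ v, (c v).isLeft = (c 0).isLeft :=
  avoids_sumElim.trans
    (and_congr_right' (avoids_sumElim.trans (and_congr_right' avoids_clash_iff)))

lemma isValid_sum_iff_exists {c : ℤ × ℤ → τ₁.T ⊕ τ₂.T} :
    (τ₁.sum τ₂).IsValid c ↔
      (∃ c₁, τ₁.IsValid c₁ ∧ c = Sum.inl ∘ c₁) ∨ ∃ c₂, τ₂.IsValid c₂ ∧ c = Sum.inr ∘ c₂ := by
  rw [isValid_sum_iff]
  constructor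
  · rintro ⟨h₁, h₂, hside⟩
    cases hc₀ : (c 0).isLeft
    · obtain ⟨c₂, rfl⟩ := (Sum.exists_eq_inr_comp_iff (c := c)).2 fun v => by
        simp [← Sum.not_isLeft, hside v, hc₀]
      exact .inr ⟨c₂, (avoids_liftPat_comp_iff Sum.inr_injective).1 h₂, rfl⟩
    · obtain ⟨c₁, rfl⟩ := (Sum.exists_eq_inl_comp_iff (c := c)).2 fun v => by
        rw [hside v, hc₀]
      exact .inl ⟨c₁, (avoids_liftPat_comp_iff Sum.inl_injective).1 h₁, rfl⟩
  · rintro (⟨c₁, hc₁, rfl⟩ | ⟨c₂, hc₂, rfl⟩)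
    · exact ⟨(avoids_liftPat_comp_iff Sum.inl_injective).2 hc₁,
        avoids_liftPat_of_forall_notMem_range (by simp), fun _ => rfl⟩
    · exact ⟨avoids_liftPat_of_forall_notMem_range (by simp),
        (avoids_liftPat_comp_iff Sum.inr_injective).2 hc₂, fun _ => rfl⟩

end Sum

variable {τ σ : TilingSystem2} {f : τ.T → σ.T}

lemma isHorizPeriod_comp_iff (hf : Injective f) {c : ℤ × ℤ → τ.T} {q : ℕ} :
    σ.IsHorizPeriod (f ∘ c) q ↔ τ.IsHorizPeriod c q := by
  simp only [IsHorizPeriod, comp_apply, hf.eq_iff]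

lemma isHorizEigenperiod_comp_iff (hf : Injective f) {c : ℤ × ℤ → τ.T} {q : ℕ} :
    σ.IsHorizEigenperiod (f ∘ c) q ↔ τ.IsHorizEigenperiod c q := by
  simp only [IsHorizEigenperiod, isHorizPeriod_comp_iff hf]

end TilingSystem2

open TilingSystem2

/-- The class `𝓗` of sets of horizontal eigenperiods is closed under union. -/
theorem Lh_closed_under_union (τ₁ τ₂ : TilingSystem2) :
    ∃ τ : TilingSystem2, τ.Lh = τ₁.Lh ∪ τ₂.Lh := by
  refine ⟨τ₁.sum τ₂, Set.ext fun q => ⟨?_, ?_⟩⟩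
  · rintro ⟨_, hc, hq⟩
    obtain ⟨c₁, hc₁, rfl⟩ | ⟨c₂, hc₂, rfl⟩ := isValid_sum_iff_exists.1 hc
    · exact .inl ⟨c₁, hc₁, (isHorizEigenperiod_comp_iff Sum.inl_injective).1 hq⟩
    · exact .inr ⟨c₂, hc₂, (isHorizEigenperiod_comp_iff Sum.inr_injective).1 hq⟩
  · rintro (⟨c₁, hc₁, hq⟩ | ⟨c₂, hc₂, hq⟩)
    · exact ⟨_, isValid_sum_iff_exists.2 (.inl ⟨c₁, hc₁, rfl⟩),
        (isHorizEigenperiod_comp_iff Sum.inl_injective).2 hq⟩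
    · exact ⟨_, isValid_sum_iff_exists.2 (.inr ⟨c₂, hc₂, rfl⟩),
        (isHorizEigenperiod_comp_iff Sum.inr_injective).2 hq⟩
end

section
/- For any dimension d ≥ 1 and any two tiling systems τ₁ and τ₂ in dimension d, there exists a tiling system τ in dimension d such that the set of eigenperiods of valid tilings of τ equals the union of the set of eigenperiods of valid tilings of τ₁ and the set of eigenperiods of valid tilings of τ₂. -/
/-- A tiling system in dimension `d`: a finite set of tiles `T` together with a
finite family of forbidden patterns, each given by a finite neighborhood
`nbhd i ⊆ ℤ^d` and a pattern `pat i : ℤ^d → T`. -/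
structure TilingSystem (d : ℕ) where
  T : Type
  fintypeT : Fintype T
  ι : Type
  fintypeι : Fintype ι
  nbhd : ι → Finset (Fin d → ℤ)
  pat : ι → (Fin d → ℤ) → T

/-- A tiling `c : ℤ^d → T` is valid if no translate of a forbidden pattern appears in it. -/
def TilingSystem.IsValid {d : ℕ} (τ : TilingSystem d) (c : (Fin d → ℤ) → τ.T) : Prop :=
  ∀ v : Fin d → ℤ, ∀ i : τ.ι, ¬ (∀ u ∈ τ.nbhd i, c (v + u) = τ.pat i u)

/-- `q` is a (total) period of `c`: `q > 0` and `c` is invariant under translation by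
`q · e_i` for every standard basis vector `e_i` of `ℤ^d`. -/
def TilingSystem.IsPeriod {d : ℕ} (τ : TilingSystem d) (c : (Fin d → ℤ) → τ.T) (q : ℕ) : Prop :=
  0 < q ∧ ∀ v : Fin d → ℤ, ∀ i : Fin d,
    c (v + fun j => if j = i then (q : ℤ) else 0) = c v

/-- `q` is the eigenperiod of `c`: the smallest (total) period of `c`. -/
def TilingSystem.IsEigenperiod {d : ℕ} (τ : TilingSystem d) (c : (Fin d → ℤ) → τ.T) (q : ℕ) : Prop :=
  τ.IsPeriod c q ∧ ∀ q' : ℕ, τ.IsPeriod c q' → q ≤ q'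

/-- `L_t(τ)`: the set of eigenperiods of valid tilings of `τ`. -/
def TilingSystem.Lt {d : ℕ} (τ : TilingSystem d) : Set ℕ :=
  { q | ∃ c : (Fin d → ℤ) → τ.T, τ.IsValid c ∧ τ.IsEigenperiod c q }

/-!
Put the tiles of `τ₁` and `τ₂` side by side, keep the forbidden patterns of both systems and
additionally forbid every domino made of a tile of one system next to a tile of the other. Since
`ℤ^d` is connected by unit steps, a valid tiling then uses tiles of a single system, and as such it
is a valid tiling of that system with the same periods.

A forbidden pattern with empty support excludes every tiling; inside the union it would also
exclude the tilings of the other system, so in that case the other system itself is the answer.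
-/

theorem apply_eq_apply_zero_of_forall_add_single {ι α : Type*} [Finite ι] [DecidableEq ι]
    {f : (ι → ℤ) → α} (hf : ∀ v i, f (v + Pi.single i 1) = f v) (v : ι → ℤ) : f v = f 0 := by
  let periods : AddSubgroup (ι → ℤ) :=
    { carrier := {w | ∀ v, f (v + w) = f v}
      add_mem' := fun ha hb v => by rw [← add_assoc, hb, ha]
      zero_mem' := fun v => by rw [add_zero]
      neg_mem' := fun {w} hw v => by rw [← hw (v + -w), neg_add_cancel_right] }
  have hspan : AddSubgroup.closure (Set.range fun i : ι => (Pi.single i 1 : ι → ℤ)) = ⊤ := by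
    rw [← Submodule.span_int_eq_addSubgroupClosure, ← funext (Pi.basisFun_apply ℤ ι),
      (Pi.basisFun ℤ ι).span_eq, Submodule.top_toAddSubgroup]
  have hle : ⊤ ≤ periods :=
    hspan ▸ (AddSubgroup.closure_le _).2 (Set.range_subset_iff.2 fun i v => hf v i)
  simpa using hle (AddSubgroup.mem_top v) 0

theorem Sum.exists_comp_inl_or_inr {X α β : Type*} {c : X → α ⊕ β} {b : Bool}
    (h : ∀ x, (c x).isLeft = b) : (∃ c₁, c = Sum.inl ∘ c₁) ∨ ∃ c₂, c = Sum.inr ∘ c₂ := by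
  cases b
  · choose c₂ hc₂ using fun x => Sum.isRight_iff.1 (Sum.not_isLeft.1 (by rw [h x]; decide))
    exact .inr ⟨c₂, funext hc₂⟩
  · choose c₁ hc₁ using fun x => Sum.isLeft_iff.1 (h x)
    exact .inl ⟨c₁, funext hc₁⟩

namespace TilingSystem

variable {d : ℕ}

theorem isPeriod_comp_iff {τ τ' : TilingSystem d} {f : τ.T → τ'.T} (hf : f.Injective)
    (c : (Fin d → ℤ) → τ.T) (q : ℕ) : τ'.IsPeriod (f ∘ c) q ↔ τ.IsPeriod c q := by
  simp only [IsPeriod, Function.comp_apply, hf.eq_iff]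

theorem isEigenperiod_comp_iff {τ τ' : TilingSystem d} {f : τ.T → τ'.T} (hf : f.Injective)
    (c : (Fin d → ℤ) → τ.T) (q : ℕ) : τ'.IsEigenperiod (f ∘ c) q ↔ τ.IsEigenperiod c q := by
  simp only [IsEigenperiod, isPeriod_comp_iff hf]

theorem Lt_eq_empty_of_nbhd_eq_empty {τ : TilingSystem d} {i : τ.ι} (hi : τ.nbhd i = ∅) :
    τ.Lt = ∅ :=
  Set.eq_empty_of_forall_notMem fun _ ⟨_, hc, _⟩ => hc 0 i (by simp [hi])

def union (τ₁ τ₂ : TilingSystem d) : TilingSystem d where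
  T := τ₁.T ⊕ τ₂.T
  fintypeT := by letI := τ₁.fintypeT; letI := τ₂.fintypeT; infer_instance
  ι := τ₁.ι ⊕ τ₂.ι ⊕ {p : Fin d × (τ₁.T ⊕ τ₂.T) × (τ₁.T ⊕ τ₂.T) // p.2.1.isLeft ≠ p.2.2.isLeft}
  fintypeι := by
    letI := τ₁.fintypeι; letI := τ₂.fintypeι; letI := τ₁.fintypeT; letI := τ₂.fintypeT
    infer_instance
  nbhd
    | .inl i => τ₁.nbhd i
    | .inr (.inl i) => τ₂.nbhd i
    | .inr (.inr p) => {0, Pi.single p.1.1 1}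
  pat
    | .inl i => Sum.inl ∘ τ₁.pat i
    | .inr (.inl i) => Sum.inr ∘ τ₂.pat i
    | .inr (.inr p) => fun u => if u = 0 then p.1.2.1 else p.1.2.2

variable {τ₁ τ₂ : TilingSystem d}

theorem union_domino_matches_iff {c : (Fin d → ℤ) → (union τ₁ τ₂).T} {v : Fin d → ℤ}
    {p : {p : Fin d × (τ₁.T ⊕ τ₂.T) × (τ₁.T ⊕ τ₂.T) // p.2.1.isLeft ≠ p.2.2.isLeft}} :
    (∀ u ∈ (union τ₁ τ₂).nbhd (.inr (.inr p)), c (v + u) = (union τ₁ τ₂).pat (.inr (.inr p)) u) ↔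
      c v = p.1.2.1 ∧ c (v + Pi.single p.1.1 1) = p.1.2.2 := by
  simp [union]

theorem isLeft_add_single_of_isValid_union {c : (Fin d → ℤ) → (union τ₁ τ₂).T}
    (hc : (union τ₁ τ₂).IsValid c) (v : Fin d → ℤ) (i : Fin d) :
    (c (v + Pi.single i 1)).isLeft = (c v).isLeft := by
  by_contra h
  exact hc v (.inr (.inr ⟨(i, c v, c (v + Pi.single i 1)), Ne.symm h⟩))
    (union_domino_matches_iff.2 ⟨rfl, rfl⟩)

theorem isValid_union_comp_inl_iff (h₂ : ∀ i, (τ₂.nbhd i).Nonempty)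
    {c : (Fin d → ℤ) → τ₁.T} : (union τ₁ τ₂).IsValid (Sum.inl ∘ c) ↔ τ₁.IsValid c := by
  refine ⟨fun h v i hm => h v (.inl i) fun u hu => by simp [union, hm u hu], ?_⟩
  rintro h v (i | i | ⟨⟨i, a, b⟩, hab⟩) hm
  · exact h v i fun u hu => Sum.inl_injective (hm u hu)
  · obtain ⟨u, hu⟩ := h₂ i
    exact Sum.inl_ne_inr (hm u hu)
  · obtain ⟨ha, hb⟩ := union_domino_matches_iff.1 hm
    exact hab (by rw [← ha, ← hb]; rfl)

theorem isValid_union_comp_inr_iff (h₁ : ∀ i, (τ₁.nbhd i).Nonempty)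
    {c : (Fin d → ℤ) → τ₂.T} : (union τ₁ τ₂).IsValid (Sum.inr ∘ c) ↔ τ₂.IsValid c := by
  refine ⟨fun h v i hm => h v (.inr (.inl i)) fun u hu => by simp [union, hm u hu], ?_⟩
  rintro h v (i | i | ⟨⟨i, a, b⟩, hab⟩) hm
  · obtain ⟨u, hu⟩ := h₁ i
    exact Sum.inr_ne_inl (hm u hu)
  · exact h v i fun u hu => Sum.inr_injective (hm u hu)
  · obtain ⟨ha, hb⟩ := union_domino_matches_iff.1 hm
    exact hab (by rw [← ha, ← hb]; rfl)

theorem Lt_union (h₁ : ∀ i, (τ₁.nbhd i).Nonempty) (h₂ : ∀ i, (τ₂.nbhd i).Nonempty) :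
    (union τ₁ τ₂).Lt = τ₁.Lt ∪ τ₂.Lt := by
  ext q
  constructor
  · rintro ⟨c, hc, hq⟩
    have hside := apply_eq_apply_zero_of_forall_add_single (f := fun v => (c v).isLeft)
      (isLeft_add_single_of_isValid_union hc)
    rcases Sum.exists_comp_inl_or_inr hside with ⟨c, rfl⟩ | ⟨c, rfl⟩
    · exact .inl ⟨c, (isValid_union_comp_inl_iff h₂).1 hc,
        (isEigenperiod_comp_iff Sum.inl_injective c q).1 hq⟩
    · exact .inr ⟨c, (isValid_union_comp_inr_iff h₁).1 hc,
        (isEigenperiod_comp_iff Sum.inr_injective c q).1 hq⟩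
  · rintro (⟨c, hc, hq⟩ | ⟨c, hc, hq⟩)
    · exact ⟨Sum.inl ∘ c, (isValid_union_comp_inl_iff h₂).2 hc,
        (isEigenperiod_comp_iff Sum.inl_injective c q).2 hq⟩
    · exact ⟨Sum.inr ∘ c, (isValid_union_comp_inr_iff h₁).2 hc,
        (isEigenperiod_comp_iff Sum.inr_injective c q).2 hq⟩

end TilingSystem

theorem Lt_closed_under_union_general {d : ℕ} (τ₁ τ₂ : TilingSystem d) :
    ∃ τ : TilingSystem d, τ.Lt = τ₁.Lt ∪ τ₂.Lt := by
  by_cases h₁ : ∃ i, τ₁.nbhd i = ∅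
  · obtain ⟨i, hi⟩ := h₁
    exact ⟨τ₂, by rw [TilingSystem.Lt_eq_empty_of_nbhd_eq_empty hi, Set.empty_union]⟩
  by_cases h₂ : ∃ i, τ₂.nbhd i = ∅
  · obtain ⟨i, hi⟩ := h₂
    exact ⟨τ₁, by rw [TilingSystem.Lt_eq_empty_of_nbhd_eq_empty hi, Set.union_empty]⟩
  push Not at h₁ h₂
  exact ⟨τ₁.union τ₂, TilingSystem.Lt_union h₁ h₂⟩

/-- The class of sets of (total) eigenperiods in dimension `d` is closed under union. -/
theorem Lt_closed_under_union {d : ℕ} (hd : 1 ≤ d) (τ₁ τ₂ : TilingSystem d) :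
    ∃ τ : TilingSystem d, τ.Lt = τ₁.Lt ∪ τ₂.Lt :=
  Lt_closed_under_union_general τ₁ τ₂
end

section
/- Let τ = (T, I) be a tiling system in dimension 2 whose forbidden patterns all have neighborhoods contained in the square {0, …, r−1} × {0, …, r−1} for some r ≥ 1. If τ admits a valid tiling with horizontal period n, then τ admits a valid tiling c that has horizontal period n and also a vertical period q with 1 ≤ q ≤ |T|^(r·n), i.e., c(x, y + q) = c(x, y) for all x, y ∈ ℤ. -/
/-- `q` is a vertical period of `c`: `q > 0` and `c (x, y + q) = c (x, y)` for all `x, y`. -/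
def TilingSystem2.IsVertPeriod (τ : TilingSystem2) (c : ℤ × ℤ → τ.T) (q : ℕ) : Prop :=
  0 < q ∧ ∀ x y : ℤ, c (x, y + (q : ℤ)) = c (x, y)

/-!
Rows of a horizontally `n`-periodic tiling are determined by their first `n` entries, so a block
of `r` consecutive rows takes at most `|T|^(r n)` values. By pigeonhole, two heights
`y₀ < y₀ + q ≤ |T|^(r n)` start the same block. Repeating rows `y₀, …, y₀ + q - 1` vertically
gives a tiling each of whose horizontal strips of height `r` already occurs in the original one;
every forbidden pattern fits in such a strip, so the new tiling is still valid.
-/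

theorem exists_lt_le_card_map_eq {β : Type*} [Fintype β] (f : ℕ → β) :
    ∃ a b, a < b ∧ b ≤ Fintype.card β ∧ f a = f b := by
  obtain ⟨a, b, hab, h⟩ :=
    Fintype.exists_ne_map_eq_of_card_lt (fun i : Fin (Fintype.card β + 1) => f i) (by simp)
  rcases lt_or_gt_of_ne (Fin.val_ne_of_ne hab) with hlt | hlt
  · exact ⟨a, b, hlt, Nat.lt_succ_iff.mp b.2, h⟩
  · exact ⟨b, a, hlt, Nat.lt_succ_iff.mp a.2, h.symm⟩

section Wrap

variable {α : Type*} {f : ℤ → α} {q r : ℕ}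

theorem apply_emod_eq_of_forall_add_eq (hq : 0 < q) (h : ∀ j < r, f (q + j) = f j)
    (t : ℕ) (ht : t < q + r) : f (t % q) = f t := by
  induction t using Nat.strong_induction_on with
  | _ t ih =>
    rcases lt_or_ge t q with htq | hqt
    · rw [Int.emod_eq_of_lt (by omega) (by omega)]
    · obtain ⟨j, rfl⟩ := Nat.exists_eq_add_of_le hqt
      have hj : j < r := by omega
      calc f (↑(q + j) % q) = f (j % q) := by push_cast; rw [Int.add_emod_left]
        _ = f j := ih j (by omega) (by omega)
        _ = f ↑(q + j) := by push_cast; exact (h j hj).symm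

theorem exists_apply_emod_add_eq (hq : 0 < q) (h : ∀ j < r, f (q + j) = f j) (b : ℤ) :
    ∃ b' : ℤ, ∀ j : ℤ, 0 ≤ j → j < r → f ((b + j) % q) = f (b' + j) := by
  refine ⟨b % q, fun j hj0 hjr => ?_⟩
  have hb0 : 0 ≤ b % q := Int.emod_nonneg b (by omega)
  have hbq : b % q < q := Int.emod_lt_of_pos b (by omega)
  have key := apply_emod_eq_of_forall_add_eq hq h ((b % q).toNat + j.toNat) (by omega)
  push_cast [Int.toNat_of_nonneg hb0, Int.toNat_of_nonneg hj0] at key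
  rwa [Int.emod_add_emod] at key

end Wrap

theorem apply_emod_fst_of_periodic {β : Type*} {c : ℤ × ℤ → β} {n : ℤ}
    (hper : ∀ x y, c (x + n, y) = c (x, y)) (x y : ℤ) : c (x % n, y) = c (x, y) := by
  have : Function.Periodic (fun x => c (x, y)) n := fun x => hper x y
  rw [Int.emod_def, mul_comm]
  exact this.sub_int_mul_eq _

theorem exists_rows_eq_of_periodic {β : Type*} [Fintype β] {c : ℤ × ℤ → β} {n : ℕ} (r : ℕ)
    (hn : 0 < n) (hper : ∀ x y, c (x + n, y) = c (x, y)) :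
    ∃ y₀ : ℤ, ∃ q : ℕ, 0 < q ∧ q ≤ Fintype.card β ^ (r * n) ∧
      ∀ x, ∀ j < r, c (x, y₀ + (q + j)) = c (x, y₀ + j) := by
  obtain ⟨a, b, hab, hb, hwin⟩ :=
    exists_lt_le_card_map_eq fun y : ℕ => fun p : Fin n × Fin r => c (p.1, y + p.2)
  simp only [Fintype.card_fun, Fintype.card_prod, Fintype.card_fin, mul_comm n r] at hb
  refine ⟨a, b - a, by omega, by omega, fun x j hj => ?_⟩
  have hx0 : 0 ≤ x % n := Int.emod_nonneg x (by omega)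
  have hxn : (x % n).toNat < n := by have := Int.emod_lt_of_pos x (by omega : (0 : ℤ) < n); omega
  have key := congrFun hwin (⟨(x % n).toNat, hxn⟩, ⟨j, hj⟩)
  simp only [Int.toNat_of_nonneg hx0, apply_emod_fst_of_periodic hper] at key
  rw [key]
  congr 2
  omega

theorem TilingSystem2.IsValid.of_forall_exists_eq_on {τ : TilingSystem2} {c c' : ℤ × ℤ → τ.T}
    {S : Set (ℤ × ℤ)} (hS : ∀ i, ∀ u ∈ τ.nbhd i, u ∈ S) (hc : τ.IsValid c)
    (h : ∀ v, ∃ w, ∀ u ∈ S, c' (v + u) = c (w + u)) : τ.IsValid c' := by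
  intro v i hpat
  obtain ⟨w, hw⟩ := h v
  exact hc w i fun u hu => (hw u (hS i u hu)).symm.trans (hpat u hu)

def vertPeriodize {β : Type*} (c : ℤ × ℤ → β) (y₀ : ℤ) (q : ℕ) : ℤ × ℤ → β :=
  fun p => c (p.1, y₀ + p.2 % q)

theorem exists_vertPeriodize_eq_on_strip {β : Type*} {c : ℤ × ℤ → β} {y₀ : ℤ} {q r : ℕ}
    (hq : 0 < q) (hrows : ∀ x, ∀ j < r, c (x, y₀ + (q + j)) = c (x, y₀ + j)) (v : ℤ × ℤ) :
    ∃ w, ∀ u ∈ {u : ℤ × ℤ | 0 ≤ u.2 ∧ u.2 < r}, vertPeriodize c y₀ q (v + u) = c (w + u) := by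
  obtain ⟨b', hb'⟩ := exists_apply_emod_add_eq (f := fun y x => c (x, y₀ + y)) hq
    (fun j hj => funext fun x => hrows x j hj) v.2
  refine ⟨(v.1, y₀ + b'), fun u hu => ?_⟩
  simpa [vertPeriodize, Prod.add_def, add_assoc] using congrFun (hb' u.2 hu.1 hu.2) (v.1 + u.1)

theorem horiz_periodic_tiling_has_bounded_vert_period_general
    (τ : TilingSystem2) (r : ℕ)
    (hsquare : ∀ i : τ.ι, ∀ u ∈ τ.nbhd i,
      0 ≤ u.1 ∧ u.1 < (r : ℤ) ∧ 0 ≤ u.2 ∧ u.2 < (r : ℤ))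
    (n : ℕ)
    (hexists : ∃ c : ℤ × ℤ → τ.T, τ.IsValid c ∧ τ.IsHorizPeriod c n) :
    ∃ c : ℤ × ℤ → τ.T, ∃ q : ℕ, τ.IsValid c ∧ τ.IsHorizPeriod c n ∧
      τ.IsVertPeriod c q ∧ q ≤ (@Fintype.card τ.T τ.fintypeT) ^ (r * n) := by
  obtain ⟨c, hc, hn, hper⟩ := hexists
  let := τ.fintypeT
  obtain ⟨y₀, q, hq, hqM, hrows⟩ := exists_rows_eq_of_periodic r hn hper
  refine ⟨vertPeriodize c y₀ q, q, ?_, ⟨hn, fun x y => hper _ _⟩,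
    ⟨hq, fun x y => by simp [vertPeriodize]⟩, hqM⟩
  exact hc.of_forall_exists_eq_on (S := {u | 0 ≤ u.2 ∧ u.2 < r})
    (fun i u hu => ⟨(hsquare i u hu).2.2.1, (hsquare i u hu).2.2.2⟩)
    (exists_vertPeriodize_eq_on_strip hq hrows)

/-- If all forbidden patterns of `τ` have neighborhoods contained in the square
`{0, …, r−1} × {0, …, r−1}` and `τ` admits a valid tiling with horizontal period `n`,
then `τ` admits a valid tiling with horizontal period `n` that moreover has a vertical
period `q` with `1 ≤ q ≤ |T|^(r·n)`. -/
theorem horiz_periodic_tiling_has_bounded_vert_period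
    (τ : TilingSystem2) (r : ℕ) (hr : 1 ≤ r)
    (hsquare : ∀ i : τ.ι, ∀ u ∈ τ.nbhd i,
      0 ≤ u.1 ∧ u.1 < (r : ℤ) ∧ 0 ≤ u.2 ∧ u.2 < (r : ℤ))
    (n : ℕ)
    (hexists : ∃ c : ℤ × ℤ → τ.T, τ.IsValid c ∧ τ.IsHorizPeriod c n) :
    ∃ c : ℤ × ℤ → τ.T, ∃ q : ℕ, τ.IsValid c ∧ τ.IsHorizPeriod c n ∧
      τ.IsVertPeriod c q ∧ q ≤ (@Fintype.card τ.T τ.fintypeT) ^ (r * n) :=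
  horiz_periodic_tiling_has_bounded_vert_period_general τ r hsquare n hexists
end

section
/- There exists a tiling system in dimension 2 that is aperiodic: it admits at least one valid tiling of the plane, but no valid tiling has any nonzero horizontal period and no valid tiling has any nonzero vertical period. -/
/-- `τ` is aperiodic: it admits a valid tiling, but no valid tiling has a nonzero
horizontal period and no valid tiling has a nonzero vertical period. -/
def TilingSystem2.Aperiodic (τ : TilingSystem2) : Prop :=
  (∃ c : ℤ × ℤ → τ.T, τ.IsValid c) ∧
    ∀ c : ℤ × ℤ → τ.T, τ.IsValid c →
      (¬ ∃ q : ℕ, τ.IsHorizPeriod c q) ∧ (¬ ∃ q : ℕ, τ.IsVertPeriod c q)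

/-!
The tiles are a variant of Kari's: a tile has a top and a bottom digit in `{0, 1, 2}`, carries on
its left and right edges and a row type `k ∈ {2, 6}`, subject to
`3 * bot + right = k * top + left` and `0 < top + bot`. A row of tiles thus multiplies the number
written by its top digits by `k / 3 ∈ {2/3, 2}`, the carries absorbing the rounding.

In a tiling with horizontal period `L` the carries telescope over one period, so the sums `S y` of
the top digits of row `y` over a period satisfy `3 * S (y + 1) = k_y * S y` and are positive.
A vertical period `p` would then give `3 ^ a = 2 ^ p`. A tiling with one period yields a doubly
periodic one: its rows (columns) range over a finite set, so two of them agree and the band between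
them can be repeated.

A tiling exists: row `y` carries the Beatty digits `⌊(x + 1) s⌋ - ⌊x s⌋` of
`s = s_y = 2 ^ (y + 1) / 3 ^ ⌈log₃ 2 ^ y⌉ ∈ (2/3, 2]`, and `s_(y+1) = (k_y / 3) s_y` for the
row type `k_y = 6` if `s_y ≤ 1`, `k_y = 2` otherwise.
-/

open Function

structure LocalRules (T : Type) where
  tile : T → Prop
  horiz : T → T → Prop
  vert : T → T → Prop

namespace LocalRules

variable {T : Type} (R : LocalRules T)

structure Admissible (c : ℤ × ℤ → T) : Prop where
  tile : ∀ v, R.tile (c v)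
  horiz : ∀ v, R.horiz (c v) (c (v + ((1, 0) : ℤ × ℤ)))
  vert : ∀ v, R.vert (c v) (c (v + ((0, 1) : ℤ × ℤ)))

def transpose : LocalRules T := ⟨R.tile, R.vert, R.horiz⟩

variable {R}

theorem Admissible.transpose {c : ℤ × ℤ → T} (hc : R.Admissible c) :
    R.transpose.Admissible (c ∘ Prod.swap) :=
  ⟨fun _ => hc.tile _, fun v => hc.vert (v.swap), fun v => hc.horiz (v.swap)⟩

variable (R) in
noncomputable def toTilingSystem2 [Finite T] : TilingSystem2 where
  T := T
  fintypeT := Fintype.ofFinite T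
  ι := {t // ¬ R.tile t} ⊕ {p : T × T // ¬ R.horiz p.1 p.2} ⊕ {p : T × T // ¬ R.vert p.1 p.2}
  fintypeι := Fintype.ofFinite _
  nbhd
    | .inl _ => {0}
    | .inr (.inl _) => {0, (1, 0)}
    | .inr (.inr _) => {0, (0, 1)}
  pat
    | .inl t => fun _ => t
    | .inr (.inl p) => fun u => if u = 0 then p.1.1 else p.1.2
    | .inr (.inr p) => fun u => if u = 0 then p.1.1 else p.1.2

theorem isValid_toTilingSystem2_iff [Finite T] {c : ℤ × ℤ → T} :
    (R.toTilingSystem2).IsValid c ↔ R.Admissible c := by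
  constructor
  · intro hc
    refine ⟨fun v => ?_, fun v => ?_, fun v => ?_⟩ <;> by_contra h
    · exact hc v (.inl ⟨_, h⟩) (by simp [toTilingSystem2])
    · exact hc v (.inr (.inl ⟨(_, _), h⟩)) (by simp [toTilingSystem2])
    · exact hc v (.inr (.inr ⟨(_, _), h⟩)) (by simp [toTilingSystem2])
  · rintro hc v (⟨t, ht⟩ | ⟨⟨s, t⟩, hst⟩ | ⟨⟨s, t⟩, hst⟩) hocc
    · have hv := hocc 0 (by simp [toTilingSystem2])
      simp only [toTilingSystem2, add_zero] at hv
      exact ht (hv ▸ hc.tile v)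
    · have hs := hocc 0 (by simp [toTilingSystem2])
      have ht := hocc (1, 0) (by simp [toTilingSystem2])
      simp [toTilingSystem2] at hs ht
      exact hst (hs ▸ ht ▸ hc.horiz v)
    · have hs := hocc 0 (by simp [toTilingSystem2])
      have ht := hocc (0, 1) (by simp [toTilingSystem2])
      simp [toTilingSystem2] at hs ht
      exact hst (hs ▸ ht ▸ hc.vert v)

end LocalRules

theorem Function.Periodic.apply_emod {β : Type*} {f : ℤ → β} {L : ℤ} (h : Periodic f L) (x : ℤ) :
    f (x % L) = f x := by
  rw [Int.emod_def, mul_comm]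
  exact h.sub_int_mul_eq _

/-- Reading rows `a, …, a + p - 1` cyclically commutes with going up one row, once row `a + p`
repeats row `a`. -/
theorem apply_add_emod_add_one {β : Type*} {f : ℤ → β} {a p : ℤ} (hp : 0 < p)
    (h : f (a + p) = f a) (y : ℤ) : f (a + (y + 1) % p) = f (a + y % p + 1) := by
  have hlt := Int.emod_lt_of_pos y hp
  have hnn := Int.emod_nonneg y hp.ne'
  have hshift : (y + 1) % p = (y % p + 1) % p := (Int.emod_add_emod y p 1).symm
  rcases (Int.add_one_le_iff.2 hlt).lt_or_eq with hlt' | heq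
  · rw [hshift, Int.emod_eq_of_lt (by omega) hlt', add_assoc]
  · rw [hshift, heq, Int.emod_self, add_zero, add_assoc, heq, h]

def IsDoublyPeriodic {T : Type} (c : ℤ × ℤ → T) : Prop :=
  ∃ L p : ℕ, 0 < L ∧ 0 < p ∧ Periodic c ((L : ℤ), 0) ∧ Periodic c (0, (p : ℤ))

namespace LocalRules

variable {T : Type} {R : LocalRules T}

theorem Admissible.exists_isDoublyPeriodic_of_periodic_horiz [Finite T] {c : ℤ × ℤ → T}
    (hc : R.Admissible c) {L : ℕ} (hL : 0 < L) (hper : Periodic c ((L : ℤ), 0)) :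
    ∃ c', R.Admissible c' ∧ IsDoublyPeriodic c' := by
  have : NeZero L := ⟨hL.ne'⟩
  have hrow (y : ℤ) : Periodic (fun x => c (x, y)) L := fun x => by simpa using hper (x, y)
  obtain ⟨a, b, hab, hrep⟩ := Finite.exists_ne_map_eq_of_infinite
    fun k : ℕ => fun i : ZMod L => c (i.val, k)
  wlog hlt : a < b generalizing a b
  · exact this b a hab.symm hrep.symm (by omega)
  have hrep' (x : ℤ) : c (x, a + (b - a : ℕ)) = c (x, a) := by
    have := congrFun hrep x
    simp only [ZMod.val_intCast, (hrow _).apply_emod] at this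
    rw [Nat.cast_sub hlt.le, add_sub_cancel]
    exact this.symm
  set p := b - a
  have hp : (0 : ℤ) < p := by omega
  refine ⟨fun v => c (v.1, a + v.2 % p), ⟨fun _ => hc.tile _, fun v => ?_, fun v => ?_⟩,
    L, p, hL, by omega, fun v => ?_, fun v => ?_⟩
  · simpa using hc.horiz (v.1, a + v.2 % p)
  · have := apply_add_emod_add_one (f := fun y => c (v.1, y)) hp (hrep' v.1) v.2
    simp only [Prod.fst_add, Prod.snd_add, add_zero]
    rw [this]
    simpa using hc.vert (v.1, a + v.2 % p)
  · simpa using hper (v.1, a + v.2 % p)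
  · simp

theorem Admissible.exists_isDoublyPeriodic_of_periodic_vert [Finite T] {c : ℤ × ℤ → T}
    (hc : R.Admissible c) {q : ℕ} (hq : 0 < q) (hper : Periodic c (0, (q : ℤ))) :
    ∃ c', R.Admissible c' ∧ IsDoublyPeriodic c' := by
  obtain ⟨d, hd, L, p, hL, hp, hdL, hdp⟩ :=
    hc.transpose.exists_isDoublyPeriodic_of_periodic_horiz hq fun v => by simpa using hper v.swap
  exact ⟨d ∘ Prod.swap, hd.transpose, p, L, hp, hL, fun v => by simpa using hdp v.swap,
    fun v => by simpa using hdL v.swap⟩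

end LocalRules

theorem TilingSystem2.IsHorizPeriod.periodic {τ : TilingSystem2} {c : ℤ × ℤ → τ.T} {q : ℕ}
    (h : τ.IsHorizPeriod c q) : Periodic c ((q : ℤ), 0) := fun (x, y) => by
  simp only [Prod.mk_add_mk, add_zero]; exact h.2 x y

theorem TilingSystem2.IsVertPeriod.periodic {τ : TilingSystem2} {c : ℤ × ℤ → τ.T} {q : ℕ}
    (h : τ.IsVertPeriod c q) : Periodic c (0, (q : ℤ)) := fun (x, y) => by
  simp only [Prod.mk_add_mk, add_zero]; exact h.2 x y

namespace Kari

open Finset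

structure Tile where
  contracting : Bool
  top : Set.Icc (0 : ℤ) 2
  bot : Set.Icc (0 : ℤ) 2
  left : Set.Icc (-5 : ℤ) 2
  right : Set.Icc (-5 : ℤ) 2

instance : Finite Tile :=
  Finite.of_injective (fun t : Tile => (t.contracting, t.top, t.bot, t.left, t.right))
    fun s t h => by cases s; cases t; simp_all

def factor (contracting : Bool) : ℤ := if contracting then 2 else 6

def rules : LocalRules Tile where
  tile t := 3 * (t.bot : ℤ) + t.right = factor t.contracting * t.top + t.left ∧
    0 < (t.top : ℤ) + t.bot
  horiz s t := s.contracting = t.contracting ∧ s.right = t.left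
  vert s t := s.bot = t.top

section RowSums

variable {c : ℤ × ℤ → Tile} (hc : rules.Admissible c) {L : ℕ}

def rowSum (c : ℤ × ℤ → Tile) (L : ℕ) (y : ℤ) : ℤ := ∑ x ∈ range L, ((c (x, y)).top : ℤ)

include hc

theorem contracting_eq (y : ℤ) (x : ℕ) : (c (x, y)).contracting = (c (0, y)).contracting := by
  induction x with
  | zero => rfl
  | succ x ih =>
    have hstep := (hc.horiz (x, y)).1
    simp only [Prod.mk_add_mk, add_zero] at hstep
    push_cast
    rw [← hstep, ih]

theorem bot_eq_top (x y : ℤ) : ((c (x, y)).bot : ℤ) = (c (x, y + 1)).top := by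
  simpa using congrArg Subtype.val (hc.vert (x, y))

theorem three_mul_rowSum_add_one (hper : Periodic c ((L : ℤ), 0)) (y : ℤ) :
    3 * rowSum c L (y + 1) = factor (c (0, y)).contracting * rowSum c L y := by
  have hbot (x : ℕ) := bot_eq_top hc x y
  have hright (x : ℕ) : ((c (x, y)).right : ℤ) = (c ((x + 1 : ℕ), y)).left := by
    simpa using congrArg Subtype.val (hc.horiz (x, y)).2
  have hsound (x : ℕ) := contracting_eq hc y x ▸ (hc.tile (x, y)).1
  have hwrap : c (L, y) = c (0, y) := by simpa using hper (0, y)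
  calc 3 * rowSum c L (y + 1)
      = ∑ x ∈ range L, (factor (c (0, y)).contracting * (c (x, y)).top
          + (((c (x, y)).left : ℤ) - (c ((x + 1 : ℕ), y)).left)) := by
        rw [rowSum, mul_sum]
        refine sum_congr rfl fun x _ => ?_
        rw [← hbot, ← hright]
        linarith [hsound x]
    _ = factor (c (0, y)).contracting * rowSum c L y := by
        rw [sum_add_distrib, sum_range_sub' (fun x : ℕ => ((c (x, y)).left : ℤ)), rowSum,
          mul_sum]
        simp [hwrap]

theorem rowSum_pos (hL : 0 < L) (hper : Periodic c ((L : ℤ), 0)) (y : ℤ) :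
    0 < rowSum c L y := by
  have hrec := three_mul_rowSum_add_one hc hper y
  have hsum : 0 < rowSum c L y + rowSum c L (y + 1) :=
    calc 0 < ∑ _x ∈ range L, (1 : ℤ) := by simpa
      _ ≤ ∑ x ∈ range L, (((c (x, y)).top : ℤ) + (c (x, y)).bot) :=
        sum_le_sum fun x _ => (hc.tile _).2
      _ = rowSum c L y + rowSum c L (y + 1) := by
        simp only [rowSum, sum_add_distrib, bot_eq_top hc]
  have hnn : 0 ≤ rowSum c L y := sum_nonneg fun x _ => (c (x, y)).top.2.1
  unfold factor at hrec
  split_ifs at hrec <;> omega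

theorem exists_three_pow_mul_rowSum (hper : Periodic c ((L : ℤ), 0)) (n : ℕ) :
    ∃ k : ℕ, 3 ^ k * rowSum c L n = 2 ^ n * rowSum c L 0 := by
  induction n with
  | zero => exact ⟨0, by simp⟩
  | succ n ih =>
    obtain ⟨k, hk⟩ := ih
    have hrec := three_mul_rowSum_add_one hc hper n
    push_cast
    unfold factor at hrec
    split_ifs at hrec
    · exact ⟨k + 1, by linear_combination (3 ^ k) * hrec + 2 * hk⟩
    · have hdouble : rowSum c L (n + 1) = 2 * rowSum c L n := by omega
      exact ⟨k, by linear_combination (3 ^ k) * hdouble + 2 * hk⟩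

theorem not_isDoublyPeriodic : ¬ IsDoublyPeriodic c := by
  rintro ⟨L, p, hL, hp, hperL, hperp⟩
  obtain ⟨k, hk⟩ := exists_three_pow_mul_rowSum hc hperL p
  have hrow : rowSum c L p = rowSum c L 0 :=
    sum_congr rfl fun x _ => by simpa using congrArg (fun t => (t.top : ℤ)) (hperp (x, 0))
  rw [hrow] at hk
  have h32 : (3 : ℤ) ^ k = 2 ^ p := mul_right_cancel₀ (rowSum_pos hc hL hperL 0).ne' hk
  have hodd : Odd ((3 : ℤ) ^ k) := Odd.pow ⟨1, rfl⟩
  exact Int.not_even_iff_odd.2 (h32 ▸ hodd) (even_two.pow_of_ne_zero hp.ne')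

end RowSums

noncomputable def exponent (y : ℤ) : ℤ := Int.clog 3 ((2 : ℚ) ^ y)

noncomputable def slope (y : ℤ) : ℚ := 2 * 2 ^ y / 3 ^ exponent y

theorem two_zpow_le_three_zpow_exponent (y : ℤ) : (2 : ℚ) ^ y ≤ 3 ^ exponent y := by
  simpa [exponent] using Int.self_le_zpow_clog (R := ℚ) (b := 3) (by norm_num) (2 ^ y)

theorem three_zpow_exponent_lt (y : ℤ) : (3 : ℚ) ^ exponent y < 3 * 2 ^ y := by
  have := Int.zpow_pred_clog_lt_self (b := 3) (R := ℚ) (by norm_num) (zpow_pos two_pos y)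
  rw [zpow_sub_one₀ (by norm_num)] at this
  push_cast at this
  simp only [exponent]
  linarith

theorem slope_mem_Ioc (y : ℤ) : slope y ∈ Set.Ioc (2 / 3) 2 := by
  have h3 : (0 : ℚ) < 3 ^ exponent y := zpow_pos three_pos _
  rw [slope, Set.mem_Ioc, lt_div_iff₀ h3, div_le_iff₀ h3]
  constructor <;> linarith [two_zpow_le_three_zpow_exponent y, three_zpow_exponent_lt y]

theorem three_mul_slope_add_one (y : ℤ) :
    3 * slope (y + 1) = factor (1 < slope y) * slope y := by
  have hmono : exponent y ≤ exponent (y + 1) :=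
    Int.clog_mono_right (zpow_pos two_pos _) (zpow_le_zpow_right₀ one_le_two (by omega))
  have hstep : exponent (y + 1) ≤ exponent y + 1 := by
    rw [exponent, ← Int.le_zpow_iff_clog_le (by norm_num) (zpow_pos two_pos _)]
    push_cast
    rw [zpow_add_one₀ two_ne_zero, zpow_add_one₀ three_ne_zero]
    linarith [two_zpow_le_three_zpow_exponent y, zpow_pos (three_pos (α := ℚ)) (exponent y)]
  have hmem' := slope_mem_Ioc (y + 1)
  rcases (show exponent (y + 1) = exponent y ∨ exponent (y + 1) = exponent y + 1 by omega)
    with h | h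
  · have hdouble : slope (y + 1) = 2 * slope y := by
      rw [slope, slope, h, zpow_add_one₀ two_ne_zero]; ring
    have : ¬ 1 < slope y := by linarith [hmem'.2]
    simp [factor, this, hdouble]; ring
  · have hshrink : 3 * slope (y + 1) = 2 * slope y := by
      rw [slope, slope, h, zpow_add_one₀ two_ne_zero, zpow_add_one₀ three_ne_zero]; field_simp
    have : 1 < slope y := by linarith [hmem'.1]
    simp [factor, this, hshrink]

def digit (β : ℚ) (x : ℤ) : ℤ := ⌊(x + 1) * β⌋ - ⌊x * β⌋

theorem digit_le {β : ℚ} {n : ℤ} (h : β ≤ n) (x : ℤ) : digit β x ≤ n := by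
  have := Int.floor_le_floor (show (x + 1) * β ≤ x * β + n by linarith)
  rw [Int.floor_add_intCast] at this
  unfold digit; omega

theorem le_digit {β : ℚ} {n : ℤ} (h : n ≤ β) (x : ℤ) : n ≤ digit β x := by
  have := Int.floor_le_floor (show x * β + n ≤ (x + 1) * β by linarith)
  rw [Int.floor_add_intCast] at this
  unfold digit; omega

theorem digit_slope_mem (y x : ℤ) : digit (slope y) x ∈ Set.Icc 0 2 :=
  ⟨le_digit (by simpa using (slope_mem_Ioc y).1.le.trans' (by norm_num)) x,
    digit_le (by simpa using (slope_mem_Ioc y).2) x⟩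

theorem floor_carry_bounds {k : ℤ} (hk : 0 < k) (u : ℚ) :
    -k < k * ⌊u⌋ - 3 * ⌊k * u / 3⌋ ∧ k * ⌊u⌋ - 3 * ⌊k * u / 3⌋ < 3 := by
  have hk' : (0 : ℚ) < k := by exact_mod_cast hk
  have h1 : (k : ℚ) * (u - 1) < k * ⌊u⌋ :=
    mul_lt_mul_of_pos_left (by linarith [Int.lt_floor_add_one u]) hk'
  have h2 : (k : ℚ) * ⌊u⌋ ≤ k * u := mul_le_mul_of_nonneg_left (Int.floor_le u) hk'.le
  have h3 := Int.floor_le ((k : ℚ) * u / 3)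
  have h4 := Int.lt_floor_add_one ((k : ℚ) * u / 3)
  constructor
  · exact_mod_cast (by linarith : (-k : ℚ) < k * ⌊u⌋ - 3 * ⌊(k : ℚ) * u / 3⌋)
  · exact_mod_cast (by linarith : (k : ℚ) * ⌊u⌋ - 3 * ⌊(k : ℚ) * u / 3⌋ < 3)

noncomputable def carry (y x : ℤ) : ℤ :=
  factor (1 < slope y) * ⌊x * slope y⌋ - 3 * ⌊x * slope (y + 1)⌋

theorem carry_mem (y x : ℤ) : carry y x ∈ Set.Icc (-5) 2 := by
  have hslope : (x : ℚ) * slope (y + 1) = factor (1 < slope y) * (x * slope y) / 3 := by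
    linear_combination (x : ℚ) / 3 * three_mul_slope_add_one y
  have hk : 0 < factor (1 < slope y) ∧ factor (1 < slope y) ≤ 6 := by
    unfold factor; split_ifs <;> norm_num
  have := floor_carry_bounds hk.1 (x * slope y)
  rw [carry, hslope, Set.mem_Icc]
  omega

noncomputable def tiling (v : ℤ × ℤ) : Tile where
  contracting := 1 < slope v.2
  top := ⟨digit (slope v.2) v.1, digit_slope_mem _ _⟩
  bot := ⟨digit (slope (v.2 + 1)) v.1, digit_slope_mem _ _⟩
  left := ⟨carry v.2 v.1, carry_mem _ _⟩
  right := ⟨carry v.2 (v.1 + 1), carry_mem _ _⟩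

theorem admissible_tiling : rules.Admissible tiling := by
  refine ⟨fun ⟨x, y⟩ => ⟨?_, ?_⟩, fun ⟨x, y⟩ => ?_, fun ⟨x, y⟩ => ?_⟩
  · simp only [tiling, digit, carry]
    push_cast
    ring
  · show 0 < digit (slope y) x + digit (slope (y + 1)) x
    have htop := (digit_slope_mem y x).1
    have hbot := (digit_slope_mem (y + 1) x).1
    by_cases h : 1 < slope y
    · linarith [le_digit (n := 1) (by exact_mod_cast h.le) x]
    · have hdouble := three_mul_slope_add_one y
      simp only [factor, h, decide_false] at hdouble
      have : ((1 : ℤ) : ℚ) ≤ slope (y + 1) := by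
        push_cast at hdouble ⊢; linarith [(slope_mem_Ioc y).1]
      linarith [le_digit this x]
  · simp [rules, tiling]
  · simp [rules, tiling]

end Kari

/-- There exists an aperiodic tiling system in dimension 2. -/
theorem exists_aperiodic_tilingSystem : ∃ τ : TilingSystem2, τ.Aperiodic := by
  refine ⟨Kari.rules.toTilingSystem2,
    ⟨Kari.tiling, LocalRules.isValid_toTilingSystem2_iff.2 Kari.admissible_tiling⟩, fun c hc => ?_⟩
  replace hc := LocalRules.isValid_toTilingSystem2_iff.1 hc
  constructor
  · rintro ⟨q, hq⟩
    obtain ⟨c', hc', hc'per⟩ := hc.exists_isDoublyPeriodic_of_periodic_horiz hq.1 hq.periodic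
    exact Kari.not_isDoublyPeriodic hc' hc'per
  · rintro ⟨q, hq⟩
    obtain ⟨c', hc', hc'per⟩ := hc.exists_isDoublyPeriodic_of_periodic_vert hq.1 hq.periodic
    exact Kari.not_isDoublyPeriodic hc' hc'per
end
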